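/- arXiv:1202.0385 — 11 statements merged into one kernel-verified Lean document; each statement's English description precedes it below -/
import Mathlib

section
/- Let R be a commutative ring and M an R-module. A proper submodule P of M is classical prime if and only if the set of ideals {(P : m) : m ∈ M \ P}, where (P : m) = {r ∈ R : r m ∈ P}, is a chain (totally ordered under inclusion) of prime ideals of R. -/
variable {R : Type*} [CommRing R] {M : Type*} [AddCommGroup M] [Module R M]

/-- A proper submodule `P` is classical prime if `a • b • m ∈ P` implies
`a • m ∈ P` or `b • m ∈ P`. -/
def IsClassicalPrime (P : Submodule R M) : Prop :=
  P ≠ ⊤ ∧ ∀ (a b : R) (m : M), a • b • m ∈ P → a • m ∈ P ∨ b • m ∈ P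

/-- A proper submodule `P` is prime if `a • m ∈ P` implies `m ∈ P` or `a • M ⊆ P`. -/
def IsPrimeSubmodule (P : Submodule R M) : Prop :=
  P ≠ ⊤ ∧ ∀ (a : R) (m : M), a • m ∈ P → m ∈ P ∨ ∀ x : M, a • x ∈ P

/-- The ideal `(P : m) = {r : R | r • m ∈ P}`. -/
def colonElem (P : Submodule R M) (m : M) : Ideal R :=
  P.comap (LinearMap.toSpanSingleton R M m)

/-- `P` is an intersection of maximal submodules. -/
def IsIntersectionOfMaximal (P : Submodule R M) : Prop :=
  ∃ S : Set (Submodule R M), (∀ N ∈ S, IsCoatom N) ∧ P = sInf S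

/-- `M` is a classical Hilbert `R`-module. -/
def IsClHilbert (R M : Type*) [CommRing R] [AddCommGroup M] [Module R M] : Prop :=
  ∀ P : Submodule R M, IsClassicalPrime P → IsIntersectionOfMaximal P

theorem stmt1 (P : Submodule R M) (hP : P ≠ ⊤) :
    IsClassicalPrime P ↔
      ((∀ m : M, m ∉ P → (colonElem P m).IsPrime) ∧
        ∀ m m' : M, m ∉ P → m' ∉ P →
          colonElem P m ≤ colonElem P m' ∨ colonElem P m' ≤ colonElem P m) := by
  have mem : ∀ (r : R) (m : M), r ∈ colonElem P m ↔ r • m ∈ P := fun r m => Iff.rfl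
  constructor
  · rintro ⟨-, hcp⟩
    constructor
    · intro m hm
      constructor
      · intro h
        exact hm (by simpa using (mem 1 m).mp (h ▸ Submodule.mem_top))
      · intro a b hab
        exact hcp a b m (by simpa [mul_smul] using (mem _ m).mp hab)
    · intro m m' hm hm'
      by_contra hcon
      push_neg at hcon
      obtain ⟨h1, h2⟩ := hcon
      obtain ⟨a, ha, ha'⟩ := SetLike.not_le_iff_exists.mp h1
      obtain ⟨b, hb, hb'⟩ := SetLike.not_le_iff_exists.mp h2
      rw [mem] at ha ha' hb hb'
      have k1 : a • b • m ∈ P := by rw [smul_comm]; exact P.smul_mem b ha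
      have key : a • b • (m + m') ∈ P := by
        rw [smul_add, smul_add]
        exact P.add_mem k1 (P.smul_mem a hb)
      rcases hcp a b (m + m') key with h | h
      · rw [smul_add] at h
        have := P.sub_mem h ha
        rw [add_sub_cancel_left] at this
        exact ha' this
      · rw [smul_add] at h
        have := P.sub_mem h hb
        rw [add_sub_cancel_right] at this
        exact hb' this
  · rintro ⟨hprime, -⟩
    refine ⟨hP, fun a b m habm => ?_⟩
    by_cases hm : m ∈ P
    · exact Or.inl (P.smul_mem a hm)
    · have : a * b ∈ colonElem P m := (mem _ _).mpr (by rwa [mul_smul])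
      exact (hprime m hm).mem_or_mem this
end

section
/- Let p be a prime number, R = ℤ[x], and P = (p, x) ⊆ R. The submodule P·(p, x) of the free R-module R ⊕ R is not equal to the intersection of the maximal submodules of R ⊕ R containing it; in particular (p, x) lies in every maximal submodule of R ⊕ R containing P·(p,x) but (p,x) ∉ P·(p,x). -/
/-!
With `v = (p, x)` and `Q = P·v`: if a maximal submodule `N ⊇ Q` missed `v`, then
`R ⊕ R = N + R v`, so `P (R ⊕ R) ⊆ N + P v ⊆ N`; but `v = p (1, 0) + x (0, 1) ∈ P (R ⊕ R)`.
On the other hand `z v = v` forces `z = 1` (look at the second coordinate), and `1 ∉ P`.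
-/

variable {R : Type*} [CommRing R] {M : Type*} [AddCommGroup M] [Module R M]

open Polynomial

theorem LinearMap.toSpanSingleton_prod {S M₁ M₂ : Type*} [Semiring S] [AddCommMonoid M₁]
    [Module S M₁] [AddCommMonoid M₂] [Module S M₂] (m₁ : M₁) (m₂ : M₂) :
    (toSpanSingleton S M₁ m₁).prod (toSpanSingleton S M₂ m₂) =
      toSpanSingleton S (M₁ × M₂) (m₁, m₂) := by
  ext <;> simp

namespace Submodule

theorem mem_of_isCoatom_of_mem_smul_top {N : Submodule R M} (hN : IsCoatom N) {I : Ideal R}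
    {v : M} (hv : v ∈ I • (⊤ : Submodule R M))
    (hIv : map (LinearMap.toSpanSingleton R M v) I ≤ N) :
    v ∈ N := by
  by_contra hvN
  have hsup : N ⊔ span R {v} = ⊤ :=
    hN.2 _ (left_lt_sup.mpr (by rwa [span_singleton_le_iff_mem]))
  suffices hI : I • (⊤ : Submodule R M) ≤ N from hvN (hI hv)
  rw [smul_le, ← hsup]
  intro a ha m hm
  obtain ⟨n, hn, _, hs, rfl⟩ := mem_sup.mp hm
  obtain ⟨s, rfl⟩ := mem_span_singleton.mp hs
  rw [smul_add, smul_comm]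
  exact add_mem (N.smul_mem a hn) (N.smul_mem s (hIv ⟨a, ha, rfl⟩))

theorem mem_map_toSpanSingleton_self_iff {I : Ideal R} {v : M}
    (hv : Function.Injective (LinearMap.toSpanSingleton R M v)) :
    v ∈ map (LinearMap.toSpanSingleton R M v) I ↔ I = ⊤ := by
  refine ⟨fun ⟨z, hz, hzv⟩ ↦ ?_, fun hI ↦ ⟨1, hI ▸ trivial, one_smul R v⟩⟩
  obtain rfl : z = 1 := hv (by simpa using hzv)
  exact (Ideal.eq_top_iff_one I).mpr hz

end Submodule

theorem Ideal.pair_mem_span_pair_smul_top (a b : R) :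
    (a, b) ∈ Ideal.span {a, b} • (⊤ : Submodule R (R × R)) := by
  have hab : (a, b) = a • ((1, 0) : R × R) + b • (0, 1) := by simp
  rw [hab]
  exact add_mem (Submodule.smul_mem_smul (Ideal.subset_span (by simp)) trivial)
    (Submodule.smul_mem_smul (Ideal.subset_span (by simp)) trivial)

namespace Polynomial

theorem span_C_X_ne_top {r : R} (hr : ¬IsUnit r) : Ideal.span {C r, X} ≠ ⊤ := by
  rw [Ne, Ideal.eq_top_iff_one, Ideal.mem_span_pair]
  rintro ⟨a, b, hab⟩
  have h0 := congrArg (eval 0) hab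
  simp only [eval_add, eval_mul, eval_C, eval_X, mul_zero, add_zero, eval_one] at h0
  exact hr (.of_mul_eq_one_right _ h0)

theorem injective_toSpanSingleton_C_X (r : R) :
    Function.Injective (LinearMap.toSpanSingleton R[X] (R[X] × R[X]) (C r, X)) :=
  fun _ _ hab ↦ isRegular_X.right (congrArg Prod.snd hab)

end Polynomial

open Polynomial in
theorem stmt7 (p : ℕ) (hp : p.Prime) :
    (∀ N : Submodule ℤ[X] (ℤ[X] × ℤ[X]), IsCoatom N →
        Submodule.map
          ((LinearMap.toSpanSingleton ℤ[X] ℤ[X] (C (p : ℤ))).prod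
            (LinearMap.toSpanSingleton ℤ[X] ℤ[X] X))
          (Ideal.span {(C (p : ℤ) : ℤ[X]), X}) ≤ N →
        ((C (p : ℤ) : ℤ[X]), (X : ℤ[X])) ∈ N) ∧
    ((C (p : ℤ) : ℤ[X]), (X : ℤ[X])) ∉
        Submodule.map
          ((LinearMap.toSpanSingleton ℤ[X] ℤ[X] (C (p : ℤ))).prod
            (LinearMap.toSpanSingleton ℤ[X] ℤ[X] X))
          (Ideal.span {(C (p : ℤ) : ℤ[X]), X}) ∧
    Submodule.map
        ((LinearMap.toSpanSingleton ℤ[X] ℤ[X] (C (p : ℤ))).prod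
          (LinearMap.toSpanSingleton ℤ[X] ℤ[X] X))
        (Ideal.span {(C (p : ℤ) : ℤ[X]), X}) ≠
      sInf {N : Submodule ℤ[X] (ℤ[X] × ℤ[X]) | IsCoatom N ∧
        Submodule.map
          ((LinearMap.toSpanSingleton ℤ[X] ℤ[X] (C (p : ℤ))).prod
            (LinearMap.toSpanSingleton ℤ[X] ℤ[X] X))
          (Ideal.span {(C (p : ℤ) : ℤ[X]), X}) ≤ N} := by
  rw [LinearMap.toSpanSingleton_prod]
  have hp' : ¬IsUnit (p : ℤ) := (Nat.prime_iff_prime_int.mp hp).not_isUnit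
  have mem_coatom : ∀ N : Submodule ℤ[X] (ℤ[X] × ℤ[X]), IsCoatom N →
      Submodule.map (LinearMap.toSpanSingleton ℤ[X] _ (C (p : ℤ), X))
        (Ideal.span {C (p : ℤ), X}) ≤ N → (C (p : ℤ), X) ∈ N :=
    fun N hN hQN ↦
      Submodule.mem_of_isCoatom_of_mem_smul_top hN (Ideal.pair_mem_span_pair_smul_top _ _) hQN
  have not_mem : (C (p : ℤ), X) ∉
      Submodule.map (LinearMap.toSpanSingleton ℤ[X] _ (C (p : ℤ), X))
        (Ideal.span {C (p : ℤ), X}) := fun h ↦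
    span_C_X_ne_top hp'
      ((Submodule.mem_map_toSpanSingleton_self_iff (injective_toSpanSingleton_C_X _)).mp h)
  refine ⟨mem_coatom, not_mem, fun heq ↦ not_mem ?_⟩
  rw [heq]
  exact Submodule.mem_sInf.mpr fun N hN ↦ mem_coatom N hN.1 hN.2
end

section
/- An R-module M is a classical Hilbert module (every classical prime submodule is an intersection of maximal submodules) if and only if every classical prime submodule of M which is not a maximal submodule is an intersection of classical prime submodules properly containing it. -/
variable {R : Type*} [CommRing R] {M : Type*} [AddCommGroup M] [Module R M]

lemma IsCoatom.isClassicalPrime {N : Submodule R M} (hN : IsCoatom N) :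
    IsClassicalPrime N := by
  refine ⟨hN.1, fun a b m habm => ?_⟩
  by_cases hb : b • m ∈ N
  · exact Or.inr hb
  · left
    have htop : N ⊔ Submodule.span R {b • m} = ⊤ := by
      refine hN.2 _ (lt_of_le_of_ne le_sup_left ?_)
      intro h
      have hmem : b • m ∈ N ⊔ Submodule.span R {b • m} :=
        Submodule.mem_sup_right (Submodule.mem_span_singleton_self _)
      exact hb (by rwa [← h] at hmem)
    have hm : m ∈ N ⊔ Submodule.span R {b • m} := htop ▸ Submodule.mem_top
    rcases Submodule.mem_sup.1 hm with ⟨n, hn, y, hy, hny⟩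
    rcases Submodule.mem_span_singleton.1 hy with ⟨r, rfl⟩
    have : a • m = a • n + r • (a • b • m) := by
      conv_lhs => rw [← hny]
      rw [smul_add, smul_comm a r]
    rw [this]
    exact N.add_mem (N.smul_mem a hn) (N.smul_mem r habm)

theorem stmt8 :
    IsClHilbert R M ↔
      ∀ P : Submodule R M, IsClassicalPrime P → ¬ IsCoatom P →
        ∃ S : Set (Submodule R M),
          (∀ Q ∈ S, IsClassicalPrime Q ∧ P < Q) ∧ P = sInf S := by
  constructor
  · intro h P hP hnc
    obtain ⟨S, hS, hPS⟩ := h P hP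
    refine ⟨S, fun Q hQ => ⟨(hS Q hQ).isClassicalPrime, ?_⟩, hPS⟩
    refine lt_of_le_of_ne (hPS ▸ sInf_le hQ) ?_
    intro e
    exact hnc (e ▸ hS Q hQ)
  · intro h P hP
    by_cases hc : IsCoatom P
    · exact ⟨{P}, by simpa using hc, by simp⟩
    refine ⟨{N | IsCoatom N ∧ P ≤ N}, fun N hN => hN.1, ?_⟩
    refine le_antisymm (le_sInf fun N hN => hN.2) ?_
    by_contra hlt
    obtain ⟨x, hxI, hxP⟩ := Set.not_subset.1 fun hsub =>
      hlt (fun y hy => hsub hy)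
    -- Zorn on classical primes containing P and missing x
    set T : Set (Submodule R M) := {Q | IsClassicalPrime Q ∧ P ≤ Q ∧ x ∉ Q} with hT
    have hub : ∀ c ⊆ T, IsChain (· ≤ ·) c → ∀ y ∈ c, ∃ ub ∈ T, ∀ z ∈ c, z ≤ ub := by
      intro c hcT hchain y hy
      refine ⟨sSup c, ?_, fun z hz => le_sSup hz⟩
      have hne : c.Nonempty := ⟨y, hy⟩
      have hdir : DirectedOn (· ≤ ·) c := hchain.directedOn
      have hmem : ∀ z : M, z ∈ sSup c ↔ ∃ N ∈ c, z ∈ N := fun z =>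
        Submodule.mem_sSup_of_directed hne hdir
      have hxs : x ∉ sSup c := by
        rw [hmem]
        rintro ⟨N, hNc, hxN⟩
        exact (hcT hNc).2.2 hxN
      refine ⟨⟨?_, ?_⟩, (hcT hy).2.1.trans (le_sSup hy), hxs⟩
      · intro htop; exact hxs (htop ▸ Submodule.mem_top)
      · intro a b m habm
        rcases (hmem _).1 habm with ⟨N, hNc, hN⟩
        rcases (hcT hNc).1.2 a b m hN with h' | h'
        · exact Or.inl ((hmem _).2 ⟨N, hNc, h'⟩)
        · exact Or.inr ((hmem _).2 ⟨N, hNc, h'⟩)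
    obtain ⟨Q, -, hQT, hQmax⟩ := zorn_le_nonempty₀ T hub P ⟨hP, le_rfl, hxP⟩
    have hQnc : ¬ IsCoatom Q := by
      intro hco
      exact hQT.2.2 (Submodule.mem_sInf.1 hxI Q ⟨hco, hQT.2.1⟩)
    obtain ⟨S', hS', hQS'⟩ := h Q hQT.1 hQnc
    have hxQ : x ∉ sInf S' := hQS' ▸ hQT.2.2
    have hex : ∃ Q' ∈ S', x ∉ Q' := by
      by_contra hall
      push_neg at hall
      exact hxQ (Submodule.mem_sInf.2 hall)
    obtain ⟨Q', hQ'S', hxQ'⟩ := hex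
    have hQ'T : Q' ∈ T := ⟨(hS' Q' hQ'S').1, hQT.2.1.trans (hS' Q' hQ'S').2.le, hxQ'⟩
    exact absurd (hQmax hQ'T (hS' Q' hQ'S').2.le) (not_le_of_gt (hS' Q' hQ'S').2)
end

section
/- Any homomorphic image of a classical Hilbert module is a classical Hilbert module; equivalently, if M is a classical Hilbert R-module and N ≤ M, then M/N is a classical Hilbert R-module. -/
variable {R : Type*} [CommRing R] {M : Type*} [AddCommGroup M] [Module R M]

/-! Pulling back along a surjection `f : M → M'` preserves classical primality, and a maximal
submodule of `M` containing `ker f` maps to a maximal submodule of `M'`; since `map f` commutes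
with intersections of submodules containing `ker f`, an expression of `P.comap f` as an
intersection of maximal submodules pushes forward to one of `P`. -/

open Submodule

variable {M' : Type*} [AddCommGroup M'] [Module R M'] {f : M →ₗ[R] M'}

theorem IsClassicalPrime.comap_of_surjective {P : Submodule R M'} (hP : IsClassicalPrime P)
    (hf : Function.Surjective f) : IsClassicalPrime (P.comap f) := by
  refine ⟨fun htop => hP.1 ?_, fun a b m hm => ?_⟩
  · rwa [← comap_top f, (comap_injective_of_surjective hf).eq_iff] at htop
  · simp only [mem_comap, map_smul] at hm ⊢
    exact hP.2 a b (f m) hm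

theorem IsIntersectionOfMaximal.of_comap {P : Submodule R M'} (hf : Function.Surjective f)
    (h : IsIntersectionOfMaximal (P.comap f)) : IsIntersectionOfMaximal P := by
  obtain ⟨S, hS, hPS⟩ := h
  have hker : LinearMap.ker f ≤ ⨅ D : S, D.1 := by
    rw [← sInf_eq_iInf', ← hPS]
    exact comap_mono bot_le
  refine ⟨map f '' S, ?_, ?_⟩
  · rintro _ ⟨D, hD, rfl⟩
    exact isCoatom_map_of_ker_le hf (hker.trans (iInf_le (fun D : S => D.1) ⟨D, hD⟩)) (hS D hD)
  · rw [← map_comap_eq_of_surjective hf P, hPS, sInf_eq_iInf', map_iInf_of_ker_le hf hker,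
      sInf_image, iInf_subtype']

theorem IsClHilbert.of_surjective (h : IsClHilbert R M) (hf : Function.Surjective f) :
    IsClHilbert R M' :=
  fun _ hP => (h _ (hP.comap_of_surjective hf)).of_comap hf

theorem stmt9 (h : IsClHilbert R M) (N : Submodule R M) :
    IsClHilbert R (M ⧸ N) :=
  h.of_surjective N.mkQ_surjective
end

section
/- Every classical prime submodule of an R-module M contains a minimal classical prime submodule of M (minimal with respect to inclusion among classical prime submodules). -/
variable {R : Type*} [CommRing R] {M : Type*} [AddCommGroup M] [Module R M]

theorem stmt11 (P : Submodule R M) (hP : IsClassicalPrime P) :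
    ∃ Q : Submodule R M, IsClassicalPrime Q ∧ Q ≤ P ∧
      ∀ Q' : Submodule R M, IsClassicalPrime Q' → Q' ≤ Q → Q' = Q := by
  obtain ⟨m, hPm, hm⟩ := @zorn_le_nonempty₀ (Submodule R M)ᵒᵈ _
    {Q : (Submodule R M)ᵒᵈ | IsClassicalPrime (OrderDual.ofDual Q) ∧ OrderDual.ofDual Q ≤ P}
    (fun c hcs hc y hy => by
      refine ⟨OrderDual.toDual (sInf (OrderDual.ofDual '' c)), ⟨⟨?_, ?_⟩, ?_⟩, ?_⟩
      · intro htop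
        apply (hcs hy).1.1
        have h2 : sInf (OrderDual.ofDual '' c) ≤ OrderDual.ofDual y :=
          sInf_le ⟨y, hy, rfl⟩
        change sInf (OrderDual.ofDual '' c) = ⊤ at htop
        rw [htop] at h2
        exact top_le_iff.mp h2
      · intro a b x hab
        by_contra hcon
        push_neg at hcon
        obtain ⟨ha, hb⟩ := hcon
        change a • b • x ∈ sInf _ at hab
        change ¬ a • x ∈ sInf _ at ha
        change ¬ b • x ∈ sInf _ at hb
        rw [Submodule.mem_sInf] at ha hb
        push_neg at ha hb
        obtain ⟨Q1, ⟨q1, hq1, rfl⟩, hQ1⟩ := ha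
        obtain ⟨Q2, ⟨q2, hq2, rfl⟩, hQ2⟩ := hb
        have habm : ∀ p ∈ c, a • b • x ∈ OrderDual.ofDual p := fun p hp =>
          Submodule.mem_sInf.mp hab _ ⟨p, hp, rfl⟩
        rcases hc.total hq1 hq2 with h | h
        · -- q1 ≤ q2 in dual, i.e. ofDual q2 ≤ ofDual q1
          rcases (hcs hq2).1.2 a b x (habm _ hq2) with h' | h'
          · exact hQ1 (h h')
          · exact hQ2 h'
        · rcases (hcs hq1).1.2 a b x (habm _ hq1) with h' | h'
          · exact hQ1 h'
          · exact hQ2 (h h')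
      · exact le_trans (sInf_le (Set.mem_image_of_mem _ hy)) (hcs hy).2
      · intro z hz
        show sInf (OrderDual.ofDual '' c) ≤ OrderDual.ofDual z
        exact sInf_le (Set.mem_image_of_mem _ hz))
    (OrderDual.toDual P) ⟨hP, le_rfl⟩
  exact ⟨OrderDual.ofDual m, hm.1.1, hm.1.2, fun Q' hQ' hle =>
    le_antisymm hle (hm.2 ⟨hQ', hle.trans hm.1.2⟩ hle)⟩
end

section
/- An R-module M is a classical Hilbert module if and only if M/N is a classical Hilbert module for every minimal classical prime submodule N of M. -/
variable {R : Type*} [CommRing R] {M : Type*} [AddCommGroup M] [Module R M]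

namespace ClHilbertAux

variable (N : Submodule R M)

lemma comap_mkQ_injective : Function.Injective (Submodule.comap N.mkQ) :=
  Submodule.comap_injective_of_surjective N.mkQ_surjective

lemma comap_map_self {P : Submodule R M} (h : N ≤ P) :
    Submodule.comap N.mkQ (Submodule.map N.mkQ P) = P := by
  rw [Submodule.comap_map_mkQ, sup_eq_right.mpr h]

lemma map_comap_self (P' : Submodule R (M ⧸ N)) :
    Submodule.map N.mkQ (Submodule.comap N.mkQ P') = P' := by
  rw [Submodule.map_comap_eq, Submodule.range_mkQ, top_inf_eq]

lemma mem_map_iff {P : Submodule R M} (h : N ≤ P) (m : M) :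
    N.mkQ m ∈ Submodule.map N.mkQ P ↔ m ∈ P := by
  constructor
  · intro hm
    have : m ∈ Submodule.comap N.mkQ (Submodule.map N.mkQ P) := hm
    rwa [comap_map_self N h] at this
  · exact fun hm => ⟨m, hm, rfl⟩

lemma comap_sInf (S : Set (Submodule R (M ⧸ N))) :
    Submodule.comap N.mkQ (sInf S) = sInf (Submodule.comap N.mkQ '' S) := by
  apply le_antisymm
  · apply le_sInf
    rintro _ ⟨K, hK, rfl⟩
    exact Submodule.comap_mono (sInf_le hK)
  · intro x hx
    simp only [Submodule.mem_comap, Submodule.mem_sInf]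
    intro K hK
    exact Submodule.mem_sInf.mp hx _ ⟨K, hK, rfl⟩

lemma map_sInf (S : Set (Submodule R M)) (h : ∀ K ∈ S, N ≤ K) :
    Submodule.map N.mkQ (sInf S) = sInf (Submodule.map N.mkQ '' S) := by
  apply comap_mkQ_injective N
  rw [comap_map_self N (le_sInf h), comap_sInf]
  apply le_antisymm
  · apply le_sInf
    rintro _ ⟨_, ⟨K, hK, rfl⟩, rfl⟩
    rw [comap_map_self N (h K hK)]
    exact sInf_le hK
  · apply le_sInf
    intro K hK
    have : Submodule.comap N.mkQ (Submodule.map N.mkQ K) ∈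
        Submodule.comap N.mkQ '' (Submodule.map N.mkQ '' S) :=
      ⟨_, ⟨K, hK, rfl⟩, rfl⟩
    calc sInf (Submodule.comap N.mkQ '' (Submodule.map N.mkQ '' S))
        ≤ Submodule.comap N.mkQ (Submodule.map N.mkQ K) := sInf_le this
      _ = K := comap_map_self N (h K hK)

lemma comap_classicalPrime {P' : Submodule R (M ⧸ N)} (h : IsClassicalPrime P') :
    IsClassicalPrime (Submodule.comap N.mkQ P') := by
  refine ⟨fun ht => h.1 ?_, fun a b m hm => ?_⟩
  · apply comap_mkQ_injective N
    rw [ht, Submodule.comap_top]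
  · have : a • b • N.mkQ m ∈ P' := by
      simpa using hm
    rcases h.2 a b (N.mkQ m) this with h' | h'
    · left; simpa using h'
    · right; simpa using h'

lemma map_classicalPrime {P : Submodule R M} (hNP : N ≤ P) (h : IsClassicalPrime P) :
    IsClassicalPrime (Submodule.map N.mkQ P) := by
  refine ⟨fun ht => h.1 ?_, fun a b x hx => ?_⟩
  · have := congrArg (Submodule.comap N.mkQ) ht
    rwa [comap_map_self N hNP, Submodule.comap_top] at this
  · obtain ⟨m, rfl⟩ := N.mkQ_surjective x
    have hm : a • b • m ∈ P := by
      rw [← mem_map_iff N hNP]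
      simpa using hx
    rcases h.2 a b m hm with h' | h'
    · left
      have := (mem_map_iff N hNP _).mpr h'
      simpa using this
    · right
      have := (mem_map_iff N hNP _).mpr h'
      simpa using this

lemma comap_coatom {K' : Submodule R (M ⧸ N)} (h : IsCoatom K') :
    IsCoatom (Submodule.comap N.mkQ K') := by
  constructor
  · intro ht
    apply h.1
    have := congrArg (Submodule.map N.mkQ) ht
    rwa [map_comap_self, Submodule.map_top, Submodule.range_mkQ] at this
  · intro L hL
    have hNL : N ≤ L := le_trans (Submodule.le_comap_mkQ N K') hL.le
    have h1 : K' < Submodule.map N.mkQ L := by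
      rw [← map_comap_self N K']
      rcases lt_iff_le_and_ne.mp hL with ⟨hle, hne⟩
      refine lt_iff_le_and_ne.mpr ⟨Submodule.map_mono hle, fun he => ?_⟩
      apply hne
      have h3 := congrArg (Submodule.comap N.mkQ) he
      rwa [comap_map_self N (Submodule.le_comap_mkQ N K'), comap_map_self N hNL] at h3
    have := h.2 _ h1
    have h2 := congrArg (Submodule.comap N.mkQ) this
    rw [comap_map_self N hNL, Submodule.comap_top] at h2
    exact h2

lemma map_coatom {K : Submodule R M} (hNK : N ≤ K) (h : IsCoatom K) :
    IsCoatom (Submodule.map N.mkQ K) := by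
  constructor
  · intro ht
    apply h.1
    have := congrArg (Submodule.comap N.mkQ) ht
    rwa [comap_map_self N hNK, Submodule.comap_top] at this
  · intro L' hL'
    have h1 : K < Submodule.comap N.mkQ L' := by
      rcases lt_iff_le_and_ne.mp hL' with ⟨hle, hne⟩
      have : K ≤ Submodule.comap N.mkQ L' := by
        rw [← comap_map_self N hNK]; exact Submodule.comap_mono hle
      refine lt_iff_le_and_ne.mpr ⟨this, fun he => ?_⟩
      apply hne
      rw [he, map_comap_self]
    have := h.2 _ h1
    have h2 := congrArg (Submodule.map N.mkQ) this
    rwa [map_comap_self, Submodule.map_top, Submodule.range_mkQ] at h2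

/-- Existence of a minimal classical prime below a classical prime. -/
lemma exists_minimal (P : Submodule R M) (hP : IsClassicalPrime P) :
    ∃ N : Submodule R M, IsClassicalPrime N ∧ N ≤ P ∧
      ∀ Q : Submodule R M, IsClassicalPrime Q → Q ≤ N → Q = N := by
  have zorn : ∃ m : (Submodule R M)ᵒᵈ, OrderDual.toDual P ≤ m ∧
      Maximal (· ∈ {Q : (Submodule R M)ᵒᵈ |
        IsClassicalPrime (OrderDual.ofDual Q) ∧ OrderDual.ofDual Q ≤ P}) m := by
    apply zorn_le_nonempty₀ _ ?_ (OrderDual.toDual P)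
      (show IsClassicalPrime P ∧ P ≤ P from ⟨hP, le_rfl⟩)
    intro c hcs hchain y hy
    refine ⟨OrderDual.toDual (sInf (OrderDual.ofDual '' c)), ?_, ?_⟩
    · show IsClassicalPrime (sInf (OrderDual.ofDual '' c)) ∧
        sInf (OrderDual.ofDual '' c) ≤ P
      refine ⟨⟨?_, ?_⟩, le_trans (sInf_le ⟨y, hy, rfl⟩) (hcs hy).2⟩
      · intro ht
        have hy' : sInf (OrderDual.ofDual '' c) ≤ OrderDual.ofDual y :=
          sInf_le ⟨y, hy, rfl⟩
        rw [ht, top_le_iff] at hy'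
        exact (hcs hy).1.1 hy'
      · intro a b m hm
        by_contra hcon
        push_neg at hcon
        obtain ⟨h1, h2⟩ := hcon
        rw [Submodule.mem_sInf] at hm
        simp only [Submodule.mem_sInf, not_forall] at h1 h2
        obtain ⟨_, ⟨Q1, hQ1c, rfl⟩, hQ1⟩ := h1
        obtain ⟨_, ⟨Q2, hQ2c, rfl⟩, hQ2⟩ := h2
        rcases hchain.total hQ1c hQ2c with hle | hle
        · have hQ2Q1 : OrderDual.ofDual Q2 ≤ OrderDual.ofDual Q1 := hle
          rcases (hcs hQ2c).1.2 a b m (hm _ ⟨Q2, hQ2c, rfl⟩) with h | h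
          · exact hQ1 (hQ2Q1 h)
          · exact hQ2 h
        · have hQ1Q2 : OrderDual.ofDual Q1 ≤ OrderDual.ofDual Q2 := hle
          rcases (hcs hQ1c).1.2 a b m (hm _ ⟨Q1, hQ1c, rfl⟩) with h | h
          · exact hQ1 h
          · exact hQ2 (hQ1Q2 h)
    · intro z hz
      rw [OrderDual.le_toDual]
      exact sInf_le ⟨z, hz, rfl⟩
  obtain ⟨m, _hPm, hmem, hmax⟩ := zorn
  refine ⟨OrderDual.ofDual m, hmem.1, hmem.2, fun Q hQ hQm => ?_⟩
  have h1 : m ≤ OrderDual.toDual Q := by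
    rw [OrderDual.le_toDual]; exact hQm
  have h2 : OrderDual.ofDual m ≤ Q := hmax ⟨hQ, hQm.trans hmem.2⟩ h1
  exact le_antisymm hQm h2

end ClHilbertAux

theorem stmt12 :
    IsClHilbert R M ↔
      ∀ N : Submodule R M,
        (IsClassicalPrime N ∧ ∀ Q : Submodule R M, IsClassicalPrime Q → Q ≤ N → Q = N) →
        IsClHilbert R (M ⧸ N) := by
  constructor
  · intro hH N _hN P' hP'
    obtain ⟨S, hS, hPS⟩ := hH (Submodule.comap N.mkQ P')
      (ClHilbertAux.comap_classicalPrime N hP')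
    have hNP : N ≤ Submodule.comap N.mkQ P' := Submodule.le_comap_mkQ N P'
    have hNS : ∀ K ∈ S, N ≤ K := fun K hK =>
      le_trans hNP (hPS ▸ sInf_le hK)
    refine ⟨Submodule.map N.mkQ '' S, ?_, ?_⟩
    · rintro _ ⟨K, hK, rfl⟩
      exact ClHilbertAux.map_coatom N (hNS K hK) (hS K hK)
    · rw [← ClHilbertAux.map_sInf N S hNS, ← hPS, ClHilbertAux.map_comap_self]
  · intro h P hP
    obtain ⟨N, hN, hNP, hNmin⟩ := ClHilbertAux.exists_minimal P hP
    have hQH := h N ⟨hN, hNmin⟩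
    obtain ⟨S', hS', hPS'⟩ := hQH (Submodule.map N.mkQ P)
      (ClHilbertAux.map_classicalPrime N hNP hP)
    refine ⟨Submodule.comap N.mkQ '' S', ?_, ?_⟩
    · rintro _ ⟨K', hK', rfl⟩
      exact ClHilbertAux.comap_coatom N (hS' K' hK')
    · rw [← ClHilbertAux.comap_sInf, ← hPS', ClHilbertAux.comap_map_self N hNP]
end

section
/- Let R be an integral domain and M a classical Hilbert R-module. If N ≤ M is a submodule such that M/N is a torsion-free R-module, then N is a classical Hilbert R-module. -/
variable {R : Type*} [CommRing R] {M : Type*} [AddCommGroup M] [Module R M]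

theorem stmt15 (R : Type*) [CommRing R] [IsDomain R]
    (M : Type*) [AddCommGroup M] [Module R M]
    (h : IsClHilbert R M) (N : Submodule R M)
    (htf : ∀ (r : R) (x : M ⧸ N), r • x = 0 → r = 0 ∨ x = 0) :
    IsClHilbert R N := by
  intro P hP
  -- push P into M
  set P' : Submodule R M := P.map N.subtype with hP'def
  have hmem : ∀ x : N, (x : M) ∈ P' ↔ x ∈ P := by
    intro x
    constructor
    · rintro ⟨p, hp, hpx⟩
      have : p = x := Subtype.ext hpx
      rwa [← this]
    · intro hx; exact ⟨x, hx, rfl⟩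
  have hP'le : P' ≤ N := by
    rintro m ⟨p, _, rfl⟩; exact p.2
  have hprime : IsClassicalPrime P' := by
    constructor
    · intro htop
      apply hP.1
      rw [eq_top_iff]
      intro x _
      exact (hmem x).1 (htop ▸ Submodule.mem_top)
    · intro a b m habm
      rcases eq_or_ne a 0 with rfl | ha
      · left; rw [zero_smul]; exact P'.zero_mem
      rcases eq_or_ne b 0 with rfl | hb
      · right; rw [zero_smul]; exact P'.zero_mem
      have hmN : m ∈ N := by
        have h1 : (a * b) • m ∈ N := by
          rw [mul_smul]; exact hP'le habm
        have h2 : (a * b) • (Submodule.Quotient.mk m : M ⧸ N) = 0 := by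
          rw [← Submodule.Quotient.mk_smul, Submodule.Quotient.mk_eq_zero]
          exact h1
        rcases htf _ _ h2 with h3 | h3
        · exact absurd h3 (mul_ne_zero ha hb)
        · rwa [Submodule.Quotient.mk_eq_zero] at h3
      set n : N := ⟨m, hmN⟩ with hn
      have : a • b • n ∈ P := by
        rw [← hmem]; exact habm
      rcases hP.2 a b n this with h4 | h4
      · left; exact (hmem _).2 h4
      · right; exact (hmem _).2 h4
  obtain ⟨S, hS, hSinf⟩ := h P' hprime
  refine ⟨{Q | ∃ K ∈ S, ¬ N ≤ K ∧ Q = K.comap N.subtype}, ?_, ?_⟩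
  · rintro Q ⟨K, hK, hNK, rfl⟩
    obtain ⟨n, hnN, hnK⟩ := Set.not_subset.1 fun hsub => hNK hsub
    constructor
    · intro htop
      exact hnK ((Submodule.mem_comap.1 (htop ▸ Submodule.mem_top : (⟨n, hnN⟩ : N) ∈ _)))
    · intro Q' hQ'
      obtain ⟨y, hyQ', hyQ⟩ := SetLike.exists_of_lt hQ'
      have hyK : (y : M) ∉ K := fun hc => hyQ (Submodule.mem_comap.2 hc)
      have hsup : K ⊔ Submodule.span R {(y : M)} = ⊤ := by
        apply (hS K hK).2
        refine lt_of_le_of_ne le_sup_left fun he => hyK ?_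
        rw [he]
        exact Submodule.mem_sup_right (Submodule.mem_span_singleton_self _)
      rw [eq_top_iff]
      intro x _
      have hx : (x : M) ∈ K ⊔ Submodule.span R {(y : M)} := hsup ▸ Submodule.mem_top
      obtain ⟨k, hk, z, hz, hkz⟩ := Submodule.mem_sup.1 hx
      obtain ⟨r, rfl⟩ := Submodule.mem_span_singleton.1 hz
      have hxr : x - r • y ∈ Q' := by
        apply hQ'.le
        apply Submodule.mem_comap.2
        have heq : ((x - r • y : N) : M) = k := by
          push_cast
          rw [← hkz]; abel
        show ((x - r • y : N) : M) ∈ K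
        rw [heq]; exact hk
      have := Q'.add_mem hxr (Q'.smul_mem r hyQ')
      simpa using this
  · apply le_antisymm
    · apply le_sInf
      rintro Q ⟨K, hK, _, rfl⟩
      intro x hx
      have hle : P' ≤ K := hSinf ▸ sInf_le hK
      exact Submodule.mem_comap.2 (hle ((hmem x).2 hx))
    · intro x hx
      apply (hmem x).1
      rw [hSinf]
      apply Submodule.mem_sInf.2
      intro K hK
      by_cases hNK : N ≤ K
      · exact hNK x.2
      · exact Submodule.mem_comap.1 (Submodule.mem_sInf.1 hx _ ⟨K, hK, hNK, rfl⟩)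
end

section
/- Let R be an integral domain, M a torsion-free classical Hilbert R-module, and N a pure submodule of M (i.e., IN = N ∩ IM for every ideal I of R). Then N is a classical Hilbert R-module. -/
open Pointwise

variable {R : Type*} [CommRing R] {M : Type*} [AddCommGroup M] [Module R M]

theorem stmt16 (R : Type*) [CommRing R] [IsDomain R]
    (M : Type*) [AddCommGroup M] [Module R M]
    (htf : ∀ (r : R) (m : M), r • m = 0 → r = 0 ∨ m = 0)
    (h : IsClHilbert R M) (N : Submodule R M)
    (hpure : ∀ I : Ideal R, I • N = N ⊓ I • (⊤ : Submodule R M)) :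
    IsClHilbert R N := by
  intro P hP
  refine ⟨{K | IsCoatom K ∧ P ≤ K}, fun K hK => hK.1, ?_⟩
  refine le_antisymm (le_sInf fun K hK => hK.2) ?_
  intro n hn
  by_contra hnP
  -- the colon ideal p = (P : n)
  set p : Ideal R := colonElem P n with hpdef
  have hpmem : ∀ s : R, s ∈ p ↔ s • n ∈ P := fun s => by
    simp [hpdef, colonElem, Submodule.mem_comap, LinearMap.toSpanSingleton_apply]
  have hone : (1 : R) ∉ p := fun hs => hnP (by simpa using (hpmem 1).1 hs)
  have hmul : ∀ s t : R, s ∉ p → t ∉ p → s * t ∉ p := by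
    intro s t hs ht hst
    rw [hpmem, mul_smul] at hst
    rcases hP.2 s t n hst with h1 | h1
    exacts [hs ((hpmem s).2 h1), ht ((hpmem t).2 h1)]
  set P' : Submodule R M := P.map N.subtype with hP'def
  -- the localized saturation of P' inside M
  let Q : Submodule R M :=
    { carrier := {m | ∃ s, s ∉ p ∧ s • m ∈ P'}
      add_mem' := by
        rintro x y ⟨s, hs, hsx⟩ ⟨t, ht, hty⟩
        refine ⟨s * t, hmul s t hs ht, ?_⟩
        have h1 : (s * t) • x = t • (s • x) := by rw [mul_comm, mul_smul]
        have h2 : (s * t) • y = s • (t • y) := mul_smul s t y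
        rw [smul_add, h1, h2]
        exact add_mem (P'.smul_mem t hsx) (P'.smul_mem s hty)
      zero_mem' := ⟨1, hone, by rw [smul_zero]; exact P'.zero_mem⟩
      smul_mem' := by
        rintro c x ⟨s, hs, hsx⟩
        exact ⟨s, hs, by rw [smul_comm]; exact P'.smul_mem c hsx⟩ }
  have hQmem : ∀ m : M, m ∈ Q ↔ ∃ s, s ∉ p ∧ s • m ∈ P' := fun m => Iff.rfl
  have hnQ : (↑n : M) ∉ Q := by
    rintro ⟨s, hs, hsn⟩
    rw [hP'def, Submodule.mem_map] at hsn
    obtain ⟨q, hqP, hq⟩ := hsn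
    have : q = s • n := Subtype.ext (by simpa using hq)
    exact hs ((hpmem s).2 (this ▸ hqP))
  have hPQ : ∀ x : ↥N, x ∈ P → (↑x : M) ∈ Q := fun x hx =>
    ⟨1, hone, by rw [one_smul]; exact Submodule.mem_map_of_mem (f := N.subtype) hx⟩
  -- Q is a classical prime of M
  have hQprime : IsClassicalPrime Q := by
    constructor
    · intro hQT
      exact hnQ (hQT ▸ Submodule.mem_top)
    · intro a b m hab
      obtain ⟨s, hs, hsab⟩ := hab
      by_cases hab0 : a * b = 0
      · rcases mul_eq_zero.1 hab0 with h1 | h1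
        · left; rw [h1, zero_smul]; exact Q.zero_mem
        · right; rw [h1, zero_smul]; exact Q.zero_mem
      · rw [hP'def, Submodule.mem_map] at hsab
        obtain ⟨q, hqP, hq⟩ := hsab
        -- hq : ↑q = s • a • b • m; rewrite as (a*b) • (s • m)
        have hq0 : (↑q : M) = s • a • b • m := hq
        have hq' : (↑q : M) = (a * b) • (s • m) := by
          rw [hq0, smul_comm s, smul_comm s, ← mul_smul]
        have hqI : (↑q : M) ∈ Ideal.span {a * b} • (⊤ : Submodule R M) := by
          rw [hq']
          exact Submodule.smul_mem_smul (Ideal.mem_span_singleton_self _) trivial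
        have hqIN : (↑q : M) ∈ Ideal.span {a * b} • N := by
          rw [hpure]
          exact ⟨q.2, hqI⟩
        rw [Submodule.ideal_span_singleton_smul, ← SetLike.mem_coe,
          Submodule.coe_pointwise_smul] at hqIN
        obtain ⟨y, hyN, hy⟩ := Set.mem_smul_set.mp hqIN
        -- (a*b) • y = ↑q = (a*b) • (s•m), torsion-freeness gives s•m = y
        have hsm : s • m = y := by
          rcases htf (a * b) (s • m - y) (by rw [smul_sub, ← hq', hy, sub_self]) with h1 | h1
          · exact absurd h1 hab0
          · exact sub_eq_zero.mp h1
        have hq2 : q = (a * b) • (⟨y, hyN⟩ : ↥N) := Subtype.ext (by rw [← hy]; rfl)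
        rw [hq2, mul_smul] at hqP
        rcases hP.2 a b ⟨y, hyN⟩ hqP with hc | hc
        · left
          refine ⟨s, hs, ?_⟩
          have : s • a • m = (↑(a • (⟨y, hyN⟩ : ↥N)) : M) := by
            rw [smul_comm, hsm]; rfl
          rw [this]
          exact Submodule.mem_map_of_mem hc
        · right
          refine ⟨s, hs, ?_⟩
          have : s • b • m = (↑(b • (⟨y, hyN⟩ : ↥N)) : M) := by
            rw [smul_comm, hsm]; rfl
          rw [this]
          exact Submodule.mem_map_of_mem hc
  obtain ⟨S, hScoatom, hQS⟩ := h Q hQprime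
  have hex : ∃ K ∈ S, (↑n : M) ∉ K := by
    by_contra hc
    push_neg at hc
    exact hnQ (hQS ▸ Submodule.mem_sInf.mpr hc)
  obtain ⟨K, hKS, hnK⟩ := hex
  have hQK : Q ≤ K := hQS ▸ sInf_le hKS
  set K' : Submodule R ↥N := K.comap N.subtype with hK'def
  have hnK' : n ∉ K' := hnK
  have hPK' : P ≤ K' := fun x hx => hQK (hPQ x hx)
  have hcoatomK' : IsCoatom K' := by
    constructor
    · intro hT
      exact hnK' (hT ▸ Submodule.mem_top)
    · intro L hL
      obtain ⟨x, hxL, hxK'⟩ := SetLike.exists_of_lt hL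
      have hsup : K ⊔ L.map N.subtype = ⊤ := by
        apply (hScoatom K hKS).2
        refine lt_of_le_of_ne le_sup_left ?_
        intro hEq
        apply hxK'
        have hxm : (↑x : M) ∈ K ⊔ Submodule.map N.subtype L :=
          Submodule.mem_sup_right (Submodule.mem_map_of_mem hxL)
        rw [← hEq] at hxm
        exact hxm
      rw [eq_top_iff]
      rintro y -
      have hy : (↑y : M) ∈ K ⊔ L.map N.subtype := hsup ▸ Submodule.mem_top
      rw [Submodule.mem_sup] at hy
      obtain ⟨k, hk, z, hz, hkz⟩ := hy
      obtain ⟨l, hlL, hlz⟩ := Submodule.mem_map.mp hz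
      have hsub : y - l ∈ K' := by
        have : (↑(y - l) : M) = k := by
          have hlz' : (↑l : M) = z := hlz
          push_cast
          rw [hlz']
          exact (eq_sub_of_add_eq hkz).symm
        show (↑(y - l) : M) ∈ K
        rw [this]; exact hk
      have : y - l ∈ L := hL.le hsub
      simpa using add_mem this hlL
  exact hnK' (Submodule.mem_sInf.mp hn K' ⟨hcoatomK', hPK'⟩)
end

section
/- Let R be a commutative ring, M an R-module, and P a classical prime submodule of M. If for every m ∈ M \ P the ideal (P : m) = {r ∈ R : r m ∈ P} is a maximal ideal of R, then P is an intersection of maximal submodules of M. -/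
variable {R : Type*} [CommRing R] {M : Type*} [AddCommGroup M] [Module R M]

theorem stmt17 (P : Submodule R M) (hP : IsClassicalPrime P)
    (hmax : ∀ m : M, m ∉ P → (colonElem P m).IsMaximal) :
    IsIntersectionOfMaximal P := by
  obtain ⟨hPtop, hPcl⟩ := hP
  have hmem : ∀ (x : M) (r : R), r ∈ colonElem P x ↔ r • x ∈ P := by
    intro x r
    simp [colonElem, Submodule.mem_comap, LinearMap.toSpanSingleton_apply]
  -- the colon ideals of elements outside P form a chain
  have hchain : ∀ m ∉ P, ∀ n ∉ P, colonElem P m ≤ colonElem P n ∨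
      colonElem P n ≤ colonElem P m := by
    intro m hm n hn
    by_contra h
    push_neg at h
    obtain ⟨⟨a, ham, han⟩, ⟨b, hbn, hbm⟩⟩ :
        (∃ a, a ∈ colonElem P m ∧ a ∉ colonElem P n) ∧
        (∃ b, b ∈ colonElem P n ∧ b ∉ colonElem P m) := by
      constructor
      · obtain ⟨a, h1, h2⟩ := Set.not_subset.mp h.1; exact ⟨a, h1, h2⟩
      · obtain ⟨b, h1, h2⟩ := Set.not_subset.mp h.2; exact ⟨b, h1, h2⟩
    rw [hmem] at ham hbn
    rw [hmem] at han hbm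
    have hmn : m + n ∉ P := by
      intro hmn
      apply han
      have : a • (m + n) - a • m ∈ P := P.sub_mem (P.smul_mem a hmn) ham
      simpa [smul_add] using this
    have : a • b • (m + n) ∈ P := by
      rw [smul_add, smul_add]
      have h1 : a • b • m ∈ P := by rw [smul_comm]; exact P.smul_mem b ham
      have h2 : a • b • n ∈ P := P.smul_mem a hbn
      exact P.add_mem h1 h2
    rcases hPcl a b (m + n) this with h' | h'
    · rw [smul_add] at h'
      exact han (by simpa using P.sub_mem h' ham)
    · rw [smul_add] at h'
      apply hbm
      have : b • m + b • n - b • n ∈ P := P.sub_mem h' hbn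
      simpa using this
  -- there is an element outside P
  obtain ⟨v₀, hv₀⟩ : ∃ v₀, v₀ ∉ P := by
    by_contra h
    push_neg at h
    exact hPtop (Submodule.eq_top_iff'.mpr h)
  set 𝔪 : Ideal R := colonElem P v₀ with h𝔪
  have h𝔪max : 𝔪.IsMaximal := hmax v₀ hv₀
  have hcoleq : ∀ m ∉ P, colonElem P m = 𝔪 := by
    intro m hm
    rcases hchain m hm v₀ hv₀ with h | h
    · exact (hmax m hm).eq_of_le h𝔪max.ne_top h
    · exact (h𝔪max.eq_of_le (hmax m hm).ne_top h).symm
  have hsmul : ∀ r ∈ 𝔪, ∀ x : M, r • x ∈ P := by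
    intro r hr x
    by_cases hx : x ∈ P
    · exact P.smul_mem r hx
    · rw [← hmem]; rw [hcoleq x hx]; exact hr
  -- for each v ∉ P there is a coatom containing P missing v
  have key : ∀ v ∉ P, ∃ N : Submodule R M, IsCoatom N ∧ P ≤ N ∧ v ∉ N := by
    intro v hv
    set s : Set (Submodule R M) := {Q | P ≤ Q ∧ v ∉ Q} with hs
    obtain ⟨Q, -, hQmax⟩ := zorn_le_nonempty₀ s (by
      intro c hc hchainc y hy
      refine ⟨sSup c, ⟨?_, ?_⟩, fun z hz => le_sSup hz⟩
      · exact le_trans (hc hy).1 (le_sSup hy)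
      · intro hvc
        rw [Submodule.mem_sSup_of_directed ⟨y, hy⟩ hchainc.directedOn] at hvc
        obtain ⟨Q, hQc, hvQ⟩ := hvc
        exact (hc hQc).2 hvQ) P ⟨le_refl P, hv⟩
    obtain ⟨⟨hPQ, hvQ⟩, hQmax'⟩ := hQmax
    -- for any x ∉ Q, v ∈ Q ⊔ span {x}
    have hv_mem : ∀ x ∉ Q, v ∈ Q ⊔ Submodule.span R {x} := by
      intro x hx
      by_contra hvmem
      have : Q ⊔ Submodule.span R {x} ∈ s := by
        refine ⟨le_trans hPQ le_sup_left, hvmem⟩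
      have := hQmax' this (le_sup_left : Q ≤ Q ⊔ Submodule.span R {x})
      exact hx (this (Submodule.mem_sup_right (Submodule.mem_span_singleton_self x)))
    -- for any x ∉ Q, x ∈ Q ⊔ span {v}
    have hx_mem : ∀ x ∉ Q, x ∈ Q ⊔ Submodule.span R {v} := by
      intro x hx
      obtain ⟨q, hq, z, hz, hqz⟩ := Submodule.mem_sup.mp (hv_mem x hx)
      obtain ⟨r, hr⟩ := Submodule.mem_span_singleton.mp hz
      -- v = q + r • x
      have hrx : r • x = v - q := by rw [← hqz, hr]; abel
      have hrnot : r ∉ 𝔪 := by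
        intro hr𝔪
        apply hvQ
        have : r • x ∈ Q := hPQ (hsmul r hr𝔪 x)
        rw [hrx] at this
        have := Q.add_mem this hq
        simpa using this
      obtain ⟨y, i, hi, hyi⟩ := h𝔪max.exists_inv hrnot
      have hx_eq : x = (y * r) • x + i • x := by
        rw [← add_smul, hyi, one_smul]
      have h1 : i • x ∈ Q := hPQ (hsmul i hi x)
      have h2 : (y * r) • x ∈ Q ⊔ Submodule.span R {v} := by
        rw [mul_smul, hrx, smul_sub]
        refine Submodule.sub_mem _ ?_ ?_
        · exact Submodule.mem_sup_right
            (Submodule.smul_mem _ y (Submodule.mem_span_singleton_self v))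
        · exact Submodule.mem_sup_left (Q.smul_mem y hq)
      rw [hx_eq]
      exact Submodule.add_mem _ h2 (Submodule.mem_sup_left h1)
    have htop : Q ⊔ Submodule.span R {v} = ⊤ := by
      rw [eq_top_iff]
      intro x _
      by_cases hx : x ∈ Q
      · exact Submodule.mem_sup_left hx
      · exact hx_mem x hx
    refine ⟨Q, ⟨?_, ?_⟩, hPQ, hvQ⟩
    · intro h; exact hvQ (h ▸ Submodule.mem_top)
    · intro N hQN
      obtain ⟨x, hxN, hxQ⟩ := SetLike.exists_of_lt hQN
      rw [eq_top_iff, ← htop, sup_le_iff]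
      constructor
      · exact hQN.le
      · rw [Submodule.span_le, Set.singleton_subset_iff]
        have hvQx := hv_mem x hxQ
        have : Q ⊔ Submodule.span R {x} ≤ N := by
          rw [sup_le_iff]
          exact ⟨hQN.le, (Submodule.span_le.mpr (Set.singleton_subset_iff.mpr hxN))⟩
        exact this hvQx
  refine ⟨{N | IsCoatom N ∧ P ≤ N}, fun N hN => hN.1, ?_⟩
  apply le_antisymm
  · exact le_sInf fun N hN => hN.2
  · intro x hx
    by_contra hxP
    obtain ⟨N, hN, hPN, hxN⟩ := key x hxP
    exact hxN (Submodule.mem_sInf.mp hx N ⟨hN, hPN⟩)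
end

section
/- If R is a commutative ring of Krull dimension zero, then every R-module is a classical Hilbert module; conversely, if every R-module is a Hilbert module (every prime submodule is an intersection of maximal submodules), then R has Krull dimension zero. -/
variable {R : Type*} [CommRing R] {M : Type*} [AddCommGroup M] [Module R M]

/-- The preimage of a coatom under the quotient map is a coatom. -/
lemma isCoatom_comap_mkQ {P : Submodule R M} {N : Submodule R (M ⧸ P)} (hN : IsCoatom N) :
    IsCoatom (N.comap P.mkQ) := by
  constructor
  · intro h
    apply hN.1
    ext q
    obtain ⟨m, rfl⟩ := P.mkQ_surjective q
    simp only [Submodule.mem_top, iff_true]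
    exact (h ▸ Submodule.mem_top : m ∈ N.comap P.mkQ)
  · intro K hK
    have hPK : P ≤ K := le_trans (fun p hp => by
      show P.mkQ p ∈ N
      rw [Submodule.mkQ_apply, (Submodule.Quotient.mk_eq_zero P).mpr hp]
      exact N.zero_mem) hK.le
    have h1 : N ≤ Submodule.map P.mkQ K := by
      intro q hq
      obtain ⟨m, rfl⟩ := P.mkQ_surjective q
      exact ⟨m, hK.le hq, rfl⟩
    have h2 : N < Submodule.map P.mkQ K := by
      rcases h1.lt_or_eq with h | h
      · exact h
      · exfalso
        have : K ≤ N.comap P.mkQ := by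
          intro k hk
          show P.mkQ k ∈ N
          rw [h]
          exact ⟨k, hk, rfl⟩
        exact (lt_irrefl _ (hK.trans_le this))
    have h3 := hN.2 _ h2
    have : K = Submodule.comap P.mkQ (Submodule.map P.mkQ K) := by
      rw [Submodule.comap_map_eq, Submodule.ker_mkQ, sup_eq_left.mpr hPK]
    rw [this, h3, Submodule.comap_top]

set_option maxHeartbeats 1000000 in
theorem stmt18 (R : Type) [CommRing R] :
    ((∀ P : Ideal R, P.IsPrime → P.IsMaximal) →
      ∀ (M : Type) [AddCommGroup M] [Module R M], IsClHilbert R M) ∧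
    ((∀ (M : Type) [AddCommGroup M] [Module R M],
        ∀ P : Submodule R M, IsPrimeSubmodule P → IsIntersectionOfMaximal P) →
      ∀ P : Ideal R, P.IsPrime → P.IsMaximal) := by
  constructor
  · -- dim R = 0 implies every module is classical Hilbert
    intro h0 M _ _ P hP
    -- Step 1: for each nonzero x in M ⧸ P, the annihilator of x is a maximal ideal
    have key : ∀ x : M ⧸ P, x ≠ 0 →
        Ideal.IsMaximal (LinearMap.ker (LinearMap.toSpanSingleton R (M ⧸ P) x)) := by
      intro x hx
      apply h0
      constructor
      · intro htop
        apply hx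
        have h1 : (1 : R) ∈ LinearMap.ker (LinearMap.toSpanSingleton R (M ⧸ P) x) :=
          htop ▸ Submodule.mem_top
        simpa using h1
      · intro a b hab
        obtain ⟨m, rfl⟩ := P.mkQ_surjective x
        have hab' : a • b • m ∈ P := by
          rw [← Submodule.Quotient.mk_eq_zero]
          have : (a * b) • P.mkQ m = 0 := hab
          rw [mul_smul] at this
          simpa [← Submodule.mkQ_apply, map_smul] using this
        rcases hP.2 a b m hab' with h | h
        · left
          show a • P.mkQ m = 0
          rw [← map_smul, Submodule.mkQ_apply, Submodule.Quotient.mk_eq_zero]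
          exact h
        · right
          show b • P.mkQ m = 0
          rw [← map_smul, Submodule.mkQ_apply, Submodule.Quotient.mk_eq_zero]
          exact h
    -- Step 2: every nonzero cyclic submodule of M ⧸ P is simple
    have hspan : ∀ x : M ⧸ P, x ≠ 0 → IsSimpleModule R (Submodule.span R {x}) := by
      intro x hx
      rw [LinearMap.span_singleton_eq_range]
      haveI : IsSimpleModule R
          (R ⧸ LinearMap.ker (LinearMap.toSpanSingleton R (M ⧸ P) x)) :=
        isSimpleModule_iff_isCoatom.mpr (Ideal.isMaximal_def.mp (key x hx))
      exact IsSimpleModule.congr (LinearMap.quotKerEquivRange _).symm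
    -- Step 3: M ⧸ P is semisimple
    haveI hss : IsSemisimpleModule R (M ⧸ P) := by
      apply IsSemisimpleModule.of_sSup_simples_eq_top
      rw [eq_top_iff]
      intro x _
      by_cases hx : x = 0
      · rw [hx]; exact Submodule.zero_mem _
      · exact (le_sSup (Set.mem_setOf.mpr (hspan x hx)) :
            Submodule.span R {x} ≤ sSup {m : Submodule R (M ⧸ P) | IsSimpleModule R m})
          (Submodule.mem_span_singleton_self x)
    -- Step 4: conclude P is an intersection of maximal submodules
    refine ⟨{N : Submodule R M | P ≤ N ∧ IsCoatom N}, fun N hN => hN.2, ?_⟩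
    apply le_antisymm
    · exact le_sInf fun N hN => hN.1
    · intro y hy
      by_contra hyP
      have hx : P.mkQ y ≠ 0 := by
        rw [Submodule.mkQ_apply, ne_eq, Submodule.Quotient.mk_eq_zero]
        exact hyP
      obtain ⟨N', hcompl⟩ := exists_isCompl (Submodule.span R {P.mkQ y})
      haveI := hspan _ hx
      have hco : IsCoatom N' := by
        rw [← isSimpleModule_iff_isCoatom]
        exact IsSimpleModule.congr (Submodule.quotientEquivOfIsCompl N' _ hcompl.symm)
      have hPle : P ≤ Submodule.comap P.mkQ N' := by
        intro p hp
        show P.mkQ p ∈ N'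
        rw [Submodule.mkQ_apply, (Submodule.Quotient.mk_eq_zero P).mpr hp]
        exact N'.zero_mem
      have hmem : y ∈ Submodule.comap P.mkQ N' :=
        Submodule.mem_sInf.mp hy _ ⟨hPle, isCoatom_comap_mkQ hco⟩
      have hmem2 : P.mkQ y ∈ Submodule.span R {P.mkQ y} ⊓ N' :=
        ⟨Submodule.mem_span_singleton_self _, hmem⟩
      rw [hcompl.inf_eq_bot] at hmem2
      exact hx hmem2
  · -- converse: every module Hilbert implies dim R = 0
    intro h P hP
    haveI := hP
    set D := R ⧸ P with hD
    set K := FractionRing D with hK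
    have hmk : ∀ b : R, b ∈ P ↔ algebraMap R D b = 0 := fun b => by
      rw [Ideal.Quotient.algebraMap_eq]
      exact (Ideal.Quotient.eq_zero_iff_mem).symm
    -- ⊥ is a prime submodule of K
    have hprime : IsPrimeSubmodule (⊥ : Submodule R K) := by
      constructor
      · intro htop
        obtain ⟨x, hx⟩ := exists_ne (0 : K)
        exact hx ((Submodule.mem_bot R).mp (htop ▸ Submodule.mem_top : x ∈ (⊥ : Submodule R K)))
      · intro a m ham
        by_cases haP : a ∈ P
        · right
          intro x
          rw [Submodule.mem_bot, ← algebraMap_smul D a x, (hmk a).mp haP, zero_smul]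
        · left
          rw [Submodule.mem_bot] at ham ⊢
          rw [← algebraMap_smul D a m, Algebra.smul_def] at ham
          rcases mul_eq_zero.mp ham with h | h
          · exact absurd ((hmk a).mpr (IsFractionRing.injective D K
              (by rw [h, map_zero]))) haP
          · exact h
    obtain ⟨S, hS, hbot⟩ := h K ⊥ hprime
    have hSne : S.Nonempty := by
      rcases Set.eq_empty_or_nonempty S with rfl | hne
      · exfalso
        rw [sInf_empty] at hbot
        obtain ⟨x, hx⟩ := exists_ne (0 : K)
        exact hx ((Submodule.mem_bot R).mp (hbot ▸ Submodule.mem_top : x ∈ (⊥ : Submodule R K)))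
      · exact hne
    obtain ⟨N, hN⟩ := hSne
    have hco := hS N hN
    haveI : IsSimpleModule R (K ⧸ N) := isSimpleModule_iff_isCoatom.mpr hco
    have hmax : (Module.annihilator R (K ⧸ N)).IsMaximal :=
      IsSimpleModule.annihilator_isMaximal
    have hAP : Module.annihilator R (K ⧸ N) = P := by
      apply le_antisymm
      · intro a ha
        by_contra haP
        haveI : Nontrivial (K ⧸ N) := IsSimpleModule.nontrivial R (K ⧸ N)
        obtain ⟨q, hq⟩ := exists_ne (0 : K ⧸ N)
        obtain ⟨m, rfl⟩ := N.mkQ_surjective q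
        have hd : algebraMap D K (algebraMap R D a) ≠ 0 := by
          intro h
          exact haP ((hmk a).mpr (IsFractionRing.injective D K (by rw [h, map_zero])))
        have hsm : a • ((algebraMap D K (algebraMap R D a))⁻¹ * m) = m := by
          rw [← algebraMap_smul D a, Algebra.smul_def, ← mul_assoc,
            mul_inv_cancel₀ hd, one_mul]
        have h0 : N.mkQ m = 0 := by
          rw [← hsm, map_smul]
          exact Module.mem_annihilator.mp ha _
        exact hq h0
      · intro a ha
        rw [Module.mem_annihilator]
        intro q
        obtain ⟨m, rfl⟩ := N.mkQ_surjective q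
        have hz : a • m = (0 : K) := by
          rw [← algebraMap_smul D a m, (hmk a).mp ha, zero_smul]
        rw [← map_smul, hz, map_zero]
    rw [← hAP]
    exact hmax
end

section
/- Let R be a one-dimensional integral domain and M a torsion R-module. Then M is a classical Hilbert module. Likewise, every Artinian R-module over any commutative ring is a classical Hilbert module. -/
variable {R : Type*} [CommRing R] {M : Type*} [AddCommGroup M] [Module R M]

lemma smul_mkQ_eq_zero (P : Submodule R M) (r : R) (m : M) :
    r • P.mkQ m = 0 ↔ r • m ∈ P := by
  rw [← map_smul, Submodule.mkQ_apply, Submodule.Quotient.mk_eq_zero]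

/-- If every nonzero element spans an atom, then `⊥` is the intersection of all coatoms. -/
lemma bot_eq_sInf_coatoms (h : ∀ x : M, x ≠ 0 → IsAtom (Submodule.span R {x})) :
    (⊥ : Submodule R M) = sInf {N : Submodule R M | IsCoatom N} := by
  have htop : sSup {a : Submodule R M | IsAtom a} = ⊤ := by
    rw [eq_top_iff]
    intro x _
    by_cases hx : x = 0
    · simp [hx]
    · have hle : Submodule.span R {x} ≤ sSup {a : Submodule R M | IsAtom a} :=
        le_sSup (h x hx)
      exact hle (Submodule.mem_span_singleton_self x)

  have : ComplementedLattice (Submodule R M) :=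
    complementedLattice_of_sSup_atoms_eq_top htop
  refine le_antisymm bot_le ?_
  intro x hx
  by_contra hx0
  have hx0 : x ≠ 0 := by simpa using hx0
  obtain ⟨N, hc⟩ := exists_isCompl (Submodule.span R {x})
  have hN : IsCoatom N := hc.isAtom_iff_isCoatom.mp (h x hx0)
  have hxN : x ∈ N := Submodule.mem_sInf.mp hx N hN
  have : x ∈ Submodule.span R {x} ⊓ N :=
    ⟨Submodule.mem_span_singleton_self x, hxN⟩
  rw [hc.inf_eq_bot] at this
  exact hx0 this

/-- Pulling back the coatoms of the quotient. -/
lemma isIntersectionOfMaximal_of_quot (P : Submodule R M)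
    (h : (⊥ : Submodule R (M ⧸ P)) = sInf {N : Submodule R (M ⧸ P) | IsCoatom N}) :
    IsIntersectionOfMaximal P := by
  refine ⟨Submodule.comap P.mkQ '' {N | IsCoatom N}, ?_, ?_⟩
  · rintro N ⟨N', hN', rfl⟩
    constructor
    · intro htop
      apply hN'.1
      rw [eq_top_iff]
      intro y _
      obtain ⟨m, rfl⟩ := P.mkQ_surjective y
      have : m ∈ Submodule.comap P.mkQ N' := htop ▸ Submodule.mem_top
      exact this
    · intro K hK
      have hPK : P ≤ Submodule.comap P.mkQ N' := by
        intro p hp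
        have : P.mkQ p = 0 := (Submodule.Quotient.mk_eq_zero P).mpr hp
        simp only [Submodule.mem_comap, this]
        exact N'.zero_mem
      have hmap : N' ≤ Submodule.map P.mkQ K := by
        conv_lhs => rw [← Submodule.map_comap_eq_of_surjective P.mkQ_surjective N']
        exact Submodule.map_mono hK.le
      have hcm : Submodule.comap P.mkQ (Submodule.map P.mkQ K) = K := by
        rw [Submodule.comap_map_eq, P.ker_mkQ, sup_eq_left.mpr (le_trans hPK hK.le)]
      have hne : Submodule.map P.mkQ K ≠ N' := by
        intro heq
        rw [heq] at hcm
        exact absurd hcm (ne_of_lt hK)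
      have : Submodule.map P.mkQ K = ⊤ := hN'.2 _ (lt_of_le_of_ne hmap (Ne.symm hne))
      rw [this] at hcm
      rw [← hcm, Submodule.comap_top]
  · apply le_antisymm
    · intro p hp
      rw [Submodule.mem_sInf]
      rintro N ⟨N', _, rfl⟩
      have : P.mkQ p = 0 := (Submodule.Quotient.mk_eq_zero P).mpr hp
      simp only [Submodule.mem_comap, this]
      exact N'.zero_mem
    · intro x hx
      rw [Submodule.mem_sInf] at hx
      have : P.mkQ x ∈ sInf {N : Submodule R (M ⧸ P) | IsCoatom N} := by
        rw [Submodule.mem_sInf]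
        intro N hN
        exact hx (Submodule.comap P.mkQ N) ⟨N, hN, rfl⟩
      rw [← h] at this
      exact (Submodule.Quotient.mk_eq_zero P).mp this

/-- Key step: if the annihilator of every nonzero element of `M ⧸ P` is maximal,
for every classical prime `P`, then `M` is classical Hilbert. -/
lemma isClHilbert_of_ann_maximal
    (h : ∀ P : Submodule R M, IsClassicalPrime P → ∀ x : M ⧸ P, x ≠ 0 →
      Ideal.IsMaximal (LinearMap.ker (LinearMap.toSpanSingleton R (M ⧸ P) x))) :
    IsClHilbert R M := by
  intro P hP
  apply isIntersectionOfMaximal_of_quot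
  apply bot_eq_sInf_coatoms
  intro x hx
  have hmax := h P hP x hx
  haveI : IsSimpleModule R (R ⧸ LinearMap.ker (LinearMap.toSpanSingleton R (M ⧸ P) x)) :=
    isSimpleModule_iff_isCoatom.mpr (Ideal.isMaximal_def.mp hmax)
  have e : Submodule.span R {x} ≃ₗ[R]
      R ⧸ LinearMap.ker (LinearMap.toSpanSingleton R (M ⧸ P) x) :=
    (LinearEquiv.ofEq _ _ (LinearMap.span_singleton_eq_range R (M ⧸ P) x)) ≪≫ₗ
      (LinearMap.quotKerEquivRange (LinearMap.toSpanSingleton R (M ⧸ P) x)).symm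
  have : IsSimpleModule R (Submodule.span R {x}) := IsSimpleModule.congr e
  exact isSimpleModule_iff_isAtom.mp this

/-- The annihilator of a nonzero element of `M ⧸ P` is a prime ideal when `P` is
classical prime. -/
lemma ann_isPrime (P : Submodule R M) (hP : IsClassicalPrime P) (x : M ⧸ P) (hx : x ≠ 0) :
    Ideal.IsPrime (LinearMap.ker (LinearMap.toSpanSingleton R (M ⧸ P) x)) := by
  obtain ⟨m, rfl⟩ := P.mkQ_surjective x
  constructor
  · intro htop
    apply hx
    have : (1 : R) ∈ LinearMap.ker (LinearMap.toSpanSingleton R (M ⧸ P) (P.mkQ m)) :=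
      htop ▸ Submodule.mem_top
    simpa [LinearMap.toSpanSingleton] using this
  · intro a b hab
    have hab' : (a * b) • (P.mkQ m) = 0 := hab
    have : a • b • m ∈ P := by
      rw [← mul_smul]
      rw [← Submodule.Quotient.mk_eq_zero P]
      rw [show ((Submodule.Quotient.mk ((a*b) • m) : M ⧸ P)) = (a*b) • P.mkQ m from
        (Submodule.Quotient.mk_smul P (a*b) m)]
      exact hab'
    rcases hP.2 a b m this with h' | h'
    · exact Or.inl ((smul_mkQ_eq_zero P a m).mpr h')
    · exact Or.inr ((smul_mkQ_eq_zero P b m).mpr h')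

theorem stmt19 :
    (∀ (R : Type) [CommRing R] [IsDomain R],
      (∀ P : Ideal R, P.IsPrime → P ≠ ⊥ → P.IsMaximal) →
      ∀ (M : Type) [AddCommGroup M] [Module R M],
        (∀ m : M, ∃ r : R, r ≠ 0 ∧ r • m = 0) → IsClHilbert R M) ∧
    (∀ (R : Type) [CommRing R] (M : Type) [AddCommGroup M] [Module R M]
        [IsArtinian R M], IsClHilbert R M) := by
  constructor
  · intro R _ _ hdim M _ _ htors
    apply isClHilbert_of_ann_maximal
    intro P hP x hx
    have hprime := ann_isPrime P hP x hx
    apply hdim _ hprime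
    -- the annihilator is nonzero by torsion
    obtain ⟨m, rfl⟩ := P.mkQ_surjective x
    obtain ⟨r, hr0, hrm⟩ := htors m
    intro hbot
    have : r ∈ LinearMap.ker (LinearMap.toSpanSingleton R (M ⧸ P) (P.mkQ m)) := by
      exact (smul_mkQ_eq_zero P r m).mpr (hrm ▸ P.zero_mem)
    rw [hbot] at this
    exact hr0 this
  · intro R _ M _ _ _
    apply isClHilbert_of_ann_maximal
    intro P hP x hx
    haveI hprime := ann_isPrime P hP x hx
    set I := LinearMap.ker (LinearMap.toSpanSingleton R (M ⧸ P) x) with hI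
    have e : Submodule.span R {x} ≃ₗ[R] R ⧸ I :=
      (LinearEquiv.ofEq _ _ (LinearMap.span_singleton_eq_range R (M ⧸ P) x)) ≪≫ₗ
        (LinearMap.quotKerEquivRange (LinearMap.toSpanSingleton R (M ⧸ P) x)).symm
    haveI : IsArtinian R (M ⧸ P) := inferInstance
    haveI : IsArtinian R (Submodule.span R {x}) := inferInstance
    haveI : IsArtinian R (R ⧸ I) :=
      isArtinian_of_injective e.symm.toLinearMap e.symm.injective
    haveI : IsArtinianRing (R ⧸ I) := by
      refine isArtinian_of_tower R ?_
      exact isArtinian_of_injective e.symm.toLinearMap e.symm.injective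
    haveI : IsDomain (R ⧸ I) := Ideal.Quotient.isDomain I
    haveI : (⊥ : Ideal (R ⧸ I)).IsPrime := Ideal.bot_prime
    have hbot : (⊥ : Ideal (R ⧸ I)).IsMaximal := IsArtinianRing.isMaximal_of_isPrime ⊥
    exact (Ideal.bot_quotient_isMaximal_iff I).mp hbot
end
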